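/- arXiv:1112.3864 — 3 statements merged into one kernel-verified Lean document; each statement's English description precedes it below -/
import Mathlib

section
/- Let V be a congruence modular variety with Gumm difference term d. If ζ is a central congruence on an algebra A ∈ V, x ζ y, and a ∈ A, then d(x, a, d(a, x, y)) = y. -/
/-- An algebraic signature: a type of operation symbols with finite arities. -/
structure Signature where
  ops : Type
  arity : ops → ℕ

/-- An algebra for a signature. -/
structure SAlgebra (S : Signature) where
  carrier : Type
  interp : (o : S.ops) → (Fin (S.arity o) → carrier) → carrier

namespace SAlgebra

variable {S : Signature}

/-- Binary product of algebras. -/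
def prod (A B : SAlgebra S) : SAlgebra S where
  carrier := A.carrier × B.carrier
  interp o x := (A.interp o fun i => (x i).1, B.interp o fun i => (x i).2)

/-- Product of a family of algebras. -/
def pi {ι : Type} (A : ι → SAlgebra S) : SAlgebra S where
  carrier := ∀ i, (A i).carrier
  interp o x i := (A i).interp o fun j => x j i

end SAlgebra

/-- Homomorphisms of algebras. -/
structure SHom {S : Signature} (A B : SAlgebra S) where
  toFun : A.carrier → B.carrier
  map : ∀ (o : S.ops) (x : Fin (S.arity o) → A.carrier),
    toFun (A.interp o x) = B.interp o fun i => toFun (x i)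

namespace SHom

variable {S : Signature}

/-- Composition of homomorphisms. -/
def comp {A B C : SAlgebra S} (g : SHom B C) (f : SHom A B) : SHom A C where
  toFun := g.toFun ∘ f.toFun
  map o x := by simp [Function.comp, f.map, g.map]

/-- The `i`-th projection of a product. -/
def proj {ι : Type} (A : ι → SAlgebra S) (i : ι) : SHom (SAlgebra.pi A) (A i) where
  toFun x := x i
  map _ _ := rfl

end SHom

/-- Congruences of an algebra. -/
structure SCon {S : Signature} (A : SAlgebra S) where
  r : A.carrier → A.carrier → Prop
  iseqv : Equivalence r
  compat : ∀ (o : S.ops) (x y : Fin (S.arity o) → A.carrier),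
    (∀ i, r (x i) (y i)) → r (A.interp o x) (A.interp o y)

namespace SCon

variable {S : Signature} {A : SAlgebra S}

instance : PartialOrder (SCon A) where
  le c d := ∀ x y, c.r x y → d.r x y
  le_refl _ _ _ h := h
  le_trans _ _ _ h h' x y hx := h' x y (h x y hx)
  le_antisymm a b h h' := by
    cases a; cases b
    have : ∀ x y : A.carrier, _ ↔ _ := fun x y => Iff.intro (h x y) (h' x y)
    simp only [SCon.mk.injEq]
    funext x y
    exact propext (this x y)

instance : InfSet (SCon A) :=
  ⟨fun s =>
    { r := fun x y => ∀ c ∈ s, c.r x y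
      iseqv := ⟨fun x c _ => c.iseqv.refl x, fun h c hc => c.iseqv.symm (h c hc),
        fun h1 h2 c hc => c.iseqv.trans (h1 c hc) (h2 c hc)⟩
      compat := fun o x y h c hc => c.compat o x y fun i => h i c hc }⟩

instance : CompleteLattice (SCon A) :=
  completeLatticeOfInf _ (fun s =>
    ⟨fun c hc x y h => h c hc, fun b hb x y h c hc => hb hc x y h⟩)

/-- Restriction (inverse image) of a congruence along a homomorphism. -/
def comap {B : SAlgebra S} (f : SHom A B) (θ : SCon B) : SCon A where
  r x y := θ.r (f.toFun x) (f.toFun y)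
  iseqv := ⟨fun _ => θ.iseqv.refl _, θ.iseqv.symm, θ.iseqv.trans⟩
  compat o x y h := by
    show θ.r (f.toFun (A.interp o x)) (f.toFun (A.interp o y))
    rw [f.map, f.map]
    exact θ.compat o _ _ h

/-- Product of two congruences. -/
def prodCon {A B : SAlgebra S} (φ : SCon A) (ψ : SCon B) : SCon (A.prod B) where
  r x y := φ.r x.1 y.1 ∧ ψ.r x.2 y.2
  iseqv := ⟨fun _ => ⟨φ.iseqv.refl _, ψ.iseqv.refl _⟩,
    fun h => ⟨φ.iseqv.symm h.1, ψ.iseqv.symm h.2⟩,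
    fun h h' => ⟨φ.iseqv.trans h.1 h'.1, ψ.iseqv.trans h.2 h'.2⟩⟩
  compat o x y h := ⟨φ.compat o _ _ fun i => (h i).1, ψ.compat o _ _ fun i => (h i).2⟩

/-- Product of a family of congruences. -/
def piCon {ι : Type} {A : ι → SAlgebra S} (φ : ∀ i, SCon (A i)) : SCon (SAlgebra.pi A) where
  r x y := ∀ i, (φ i).r (x i) (y i)
  iseqv := ⟨fun _ i => (φ i).iseqv.refl _, fun h i => (φ i).iseqv.symm (h i),
    fun h h' i => (φ i).iseqv.trans (h i) (h' i)⟩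
  compat o x y h i := (φ i).compat o _ _ fun j => h j i

end SCon

/-- Terms in `n` variables over a signature. -/
inductive STerm (S : Signature) : ℕ → Type where
  | var : {n : ℕ} → Fin n → STerm S n
  | app : {n : ℕ} → (o : S.ops) → (Fin (S.arity o) → STerm S n) → STerm S n

/-- Evaluation of a term in an algebra. -/
def STerm.eval {S : Signature} (A : SAlgebra S) {n : ℕ} : STerm S n → (Fin n → A.carrier) → A.carrier
  | .var i, x => x i
  | .app o t, x => A.interp o fun j => (t j).eval A x

/-- The term-condition centralizer relation `C(α, β; δ)`. -/
def Centralizes {S : Signature} (A : SAlgebra S) (α β δ : SCon A) : Prop :=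
  ∀ (n m : ℕ) (t : STerm S (n + m)) (a b : Fin n → A.carrier) (u v : Fin m → A.carrier),
    (∀ i, α.r (a i) (b i)) → (∀ j, β.r (u j) (v j)) →
    δ.r (t.eval A (Fin.append a u)) (t.eval A (Fin.append a v)) →
    δ.r (t.eval A (Fin.append b u)) (t.eval A (Fin.append b v))

/-- The commutator `[α, β]`: the least congruence `δ` with `C(α, β; δ)`. -/
def conCommutator {S : Signature} (A : SAlgebra S) (α β : SCon A) : SCon A :=
  sInf {δ | Centralizes A α β δ}

/-- The center of an algebra: the largest central congruence. -/
def conCenter {S : Signature} (A : SAlgebra S) : SCon A :=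
  sSup {θ | conCommutator A θ ⊤ = ⊥}

/-- A class of algebras is a variety iff it is closed under subalgebras
(isomorphic copies included), homomorphic images and products. -/
def IsVariety {S : Signature} (V : SAlgebra S → Prop) : Prop :=
  (∀ (A B : SAlgebra S) (e : SHom A B), Function.Injective e.toFun → V B → V A) ∧
  (∀ (A B : SAlgebra S) (p : SHom A B), Function.Surjective p.toFun → V A → V B) ∧
  (∀ (ι : Type) (A : ι → SAlgebra S), (∀ i, V (A i)) → V (SAlgebra.pi A))

/-- A congruence modular variety. -/
def IsCongruenceModularVariety {S : Signature} (V : SAlgebra S → Prop) : Prop :=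
  IsVariety V ∧ ∀ A : SAlgebra S, V A → IsModularLattice (SCon A)

/-- A Gumm difference term for the class `V`:  `d(x,y,y) = x` holds identically,
and `d(x,x,y) = y` whenever `x θ y` for an abelian congruence `θ`. -/
def IsGummDifferenceTerm {S : Signature} (V : SAlgebra S → Prop) (d : STerm S 3) : Prop :=
  (∀ A : SAlgebra S, V A → ∀ x y : A.carrier, d.eval A ![x, y, y] = x) ∧
  (∀ A : SAlgebra S, V A → ∀ θ : SCon A, conCommutator A θ θ = ⊥ →
    ∀ x y : A.carrier, θ.r x y → d.eval A ![x, x, y] = y)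

/-- `R` is an absolute retract in `V`: every embedding of `R` into a member of `V`
admits a retraction. -/
def IsAbsoluteRetract {S : Signature} (V : SAlgebra S → Prop) (R : SAlgebra S) : Prop :=
  ∀ A : SAlgebra S, V A → ∀ e : SHom R A, Function.Injective e.toFun →
    ∃ p : SHom A R, ∀ x, p.toFun (e.toFun x) = x

/-- An embedding is essential iff every congruence of the codomain restricting
trivially is trivial. -/
def IsEssential {S : Signature} {A B : SAlgebra S} (e : SHom A B) : Prop :=
  ∀ θ : SCon B, SCon.comap e θ = ⊥ → θ = ⊥

/-- A congruence `α` is dense: any congruence meeting it trivially is trivial. -/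
def DenseCon {S : Signature} {A : SAlgebra S} (α : SCon A) : Prop :=
  ∀ θ : SCon A, θ ⊓ α = ⊥ → θ = ⊥

/-- The setoid underlying a congruence. -/
def SCon.setoid {S : Signature} {A : SAlgebra S} (θ : SCon A) : Setoid A.carrier :=
  ⟨θ.r, θ.iseqv⟩

/-- Quotient algebra. -/
noncomputable def SAlgebra.quot {S : Signature} (A : SAlgebra S) (θ : SCon A) : SAlgebra S where
  carrier := Quotient θ.setoid
  interp o x := Quotient.mk θ.setoid (A.interp o fun i => (x i).out)

theorem SCon.out_rel {S : Signature} {A : SAlgebra S} (θ : SCon A) (a : A.carrier) :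
    θ.r (Quotient.out (Quotient.mk θ.setoid a)) a :=
  @Quotient.exact _ θ.setoid _ _ (Quotient.out_eq _)

/-- The canonical quotient homomorphism. -/
def SHom.quotHom {S : Signature} (A : SAlgebra S) (θ : SCon A) : SHom A (A.quot θ) where
  toFun := Quotient.mk θ.setoid
  map o x := Quotient.sound (θ.compat o _ _ fun i => θ.iseqv.symm (θ.out_rel (x i)))

/-- Product map of a family of homomorphisms. -/
def SHom.piMap {S : Signature} {ι : Type} {A B : ι → SAlgebra S} (f : ∀ i, SHom (A i) (B i)) :
    SHom (SAlgebra.pi A) (SAlgebra.pi B) where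
  toFun x i := (f i).toFun (x i)
  map o x := funext fun i => (f i).map o fun j => x j i

/-- The congruence `φ/θ` on the quotient `A/θ`, for `θ ≤ φ`. -/
def SCon.quotCon {S : Signature} {A : SAlgebra S} (θ φ : SCon A) (h : θ ≤ φ) :
    SCon (A.quot θ) where
  r a b := φ.r a.out b.out
  iseqv := ⟨fun _ => φ.iseqv.refl _, φ.iseqv.symm, φ.iseqv.trans⟩
  compat o x y hxy := by
    have hx := h _ _ (θ.out_rel (A.interp o fun i => (x i).out))
    have hy := h _ _ (θ.out_rel (A.interp o fun i => (y i).out))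
    exact φ.iseqv.trans hx (φ.iseqv.trans (φ.compat o _ _ hxy) (φ.iseqv.symm hy))

/-- Finitely subdirectly irreducible: `⊥` is meet irreducible in the congruence lattice. -/
def IsFSI {S : Signature} (A : SAlgebra S) : Prop :=
  ∀ θ φ : SCon A, θ ⊓ φ = ⊥ → θ = ⊥ ∨ φ = ⊥

/-- Subdirectly irreducible: the congruence lattice has a monolith. -/
def IsSubdirectlyIrreducible {S : Signature} (A : SAlgebra S) : Prop :=
  ∃ μ : SCon A, μ ≠ ⊥ ∧ ∀ θ : SCon A, θ ≠ ⊥ → μ ≤ θ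

/-!
`t(w, p, q) := d(p, q, d(q, p, w))` satisfies `t(x, x, a) = x = t(x, y, y)`, using `d(u, v, v) = u`
and `d(y, y, x) = x` (as `ζ` is abelian). Centrality of `ζ` lets us replace the first argument `x`
by `y` on both sides, giving `d(x, a, d(a, x, y)) = t(y, x, a) = t(y, y, y) = y`.
-/

variable {S : Signature}

def STerm.subst {n m : ℕ} : STerm S n → (Fin n → STerm S m) → STerm S m
  | .var i, σ => σ i
  | .app o t, σ => .app o fun j => (t j).subst σ

theorem STerm.eval_subst (A : SAlgebra S) {n m : ℕ} (t : STerm S n) (σ : Fin n → STerm S m)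
    (x : Fin m → A.carrier) :
    (t.subst σ).eval A x = t.eval A fun i => (σ i).eval A x := by
  induction t with
  | var i => rfl
  | app o ts ih => simp only [STerm.subst, STerm.eval, ih]

namespace SCon

variable {A : SAlgebra S}

def diagonal : SCon A where
  r := Eq
  iseqv := eq_equivalence
  compat _ _ _ h := congrArg _ (funext h)

theorem r_bot_iff {p q : A.carrier} : (⊥ : SCon A).r p q ↔ p = q :=
  ⟨fun h => (bot_le : ⊥ ≤ diagonal) p q h, fun h => h ▸ (⊥ : SCon A).iseqv.refl p⟩

theorem r_top (p q : A.carrier) : (⊤ : SCon A).r p q :=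
  fun _ h => h.elim

end SCon

theorem centralizes_conCommutator (A : SAlgebra S) (α β : SCon A) :
    Centralizes A α β (conCommutator A α β) :=
  fun n m t a b u v ha hb h δ hδ => hδ n m t a b u v ha hb (h δ hδ)

theorem Centralizes.mono_right {A : SAlgebra S} {α β β' δ : SCon A} (h : Centralizes A α β δ)
    (hβ : β' ≤ β) : Centralizes A α β' δ :=
  fun n m t a b u v ha hb => h n m t a b u v ha fun j => hβ _ _ (hb j)

theorem conCommutator_mono_right (A : SAlgebra S) (α : SCon A) {β β' : SCon A}
    (hβ : β ≤ β') :
    conCommutator A α β ≤ conCommutator A α β' :=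
  sInf_le_sInf fun _ hδ => Centralizes.mono_right hδ hβ

theorem conCommutator_self_eq_bot_of_central {A : SAlgebra S} {ζ : SCon A}
    (hζ : conCommutator A ζ ⊤ = ⊥) : conCommutator A ζ ζ = ⊥ :=
  le_bot_iff.mp (hζ ▸ conCommutator_mono_right A ζ le_top)

theorem eval_eq_eval_of_central {A : SAlgebra S} {ζ : SCon A} (hζ : conCommutator A ζ ⊤ = ⊥)
    (t : STerm S 3) {x y : A.carrier} (hxy : ζ.r x y) {p q p' q' : A.carrier}
    (h : t.eval A ![x, p, q] = t.eval A ![x, p', q']) :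
    t.eval A ![y, p, q] = t.eval A ![y, p', q'] := by
  have happend : ∀ w u v : A.carrier, Fin.append ![w] ![u, v] = ![w, u, v] := fun _ _ _ => by
    funext i; fin_cases i <;> rfl
  have hcent : Centralizes A ζ ⊤ ⊥ := hζ ▸ centralizes_conCommutator A ζ ⊤
  have hterm := hcent 1 2 t ![x] ![y] ![p, q] ![p', q'] (Fin.forall_fin_one.mpr hxy)
    (fun _ => SCon.r_top _ _)
  simp only [happend, SCon.r_bot_iff] at hterm
  exact hterm h

def gummTerm (d : STerm S 3) : STerm S 3 :=
  d.subst ![.var 1, .var 2, d.subst ![.var 2, .var 1, .var 0]]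

theorem eval_gummTerm (A : SAlgebra S) (d : STerm S 3) (w p q : A.carrier) :
    (gummTerm d).eval A ![w, p, q] = d.eval A ![p, q, d.eval A ![q, p, w]] := by
  have hσ : ∀ s₀ s₁ s₂ : STerm S 3, (fun i => (![s₀, s₁, s₂] i).eval A ![w, p, q]) =
      ![s₀.eval A ![w, p, q], s₁.eval A ![w, p, q], s₂.eval A ![w, p, q]] := fun _ _ _ => by
    funext i; fin_cases i <;> rfl
  simp only [gummTerm, STerm.eval_subst, hσ]
  rfl

theorem gumm_identity_central_general {S : Signature}
    (V : SAlgebra S → Prop)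
    (d : STerm S 3) (hd : IsGummDifferenceTerm V d)
    (A : SAlgebra S) (hA : V A)
    (ζ : SCon A) (hζ : conCommutator A ζ ⊤ = ⊥)
    (x y a : A.carrier) (hxy : ζ.r x y) :
    d.eval A ![x, a, d.eval A ![a, x, y]] = y := by
  have hid : ∀ u v : A.carrier, d.eval A ![u, v, v] = u := hd.1 A hA
  have habel : ∀ u v : A.carrier, ζ.r u v → d.eval A ![u, u, v] = v :=
    hd.2 A hA ζ (conCommutator_self_eq_bot_of_central hζ)
  have hstart : (gummTerm d).eval A ![x, x, a] = (gummTerm d).eval A ![x, y, y] := by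
    rw [eval_gummTerm, eval_gummTerm, hid, hid, habel y x (ζ.iseqv.symm hxy),
      habel y x (ζ.iseqv.symm hxy)]
  have hend := eval_eq_eval_of_central hζ (gummTerm d) hxy hstart
  rwa [eval_gummTerm, eval_gummTerm, hid, habel y y (ζ.iseqv.refl y)] at hend

/-- In a congruence modular variety with Gumm difference term `d`, if `ζ` is a central
congruence on `A`, `x ζ y` and `a ∈ A`, then `d(x, a, d(a, x, y)) = y`. -/
theorem gumm_identity_central {S : Signature}
    (V : SAlgebra S → Prop) (hV : IsCongruenceModularVariety V)
    (d : STerm S 3) (hd : IsGummDifferenceTerm V d)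
    (A : SAlgebra S) (hA : V A)
    (ζ : SCon A) (hζ : conCommutator A ζ ⊤ = ⊥)
    (x y a : A.carrier) (hxy : ζ.r x y) :
    d.eval A ![x, a, d.eval A ![a, x, y]] = y :=
  gumm_identity_central_general V d hd A hA ζ hζ x y a hxy
end

section
/- If e: A → ∏_{i=1}^n A_i is a subdirect product-essential embedding and η_i is the kernel of the i-th projection restricted to A, then ⋀_{i=1}^n η_i = 0_A, and whenever φ_i ≥ η_i for all i with ⋀_{i=1}^n φ_i = 0_A, it follows that φ_i = η_i for all i. -/
namespace SCon

variable {S : Signature} {A : SAlgebra S}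

theorem ext {c d : SCon A} (h : ∀ x y, c.r x y ↔ d.r x y) : c = d :=
  le_antisymm (fun x y => (h x y).1) (fun x y => (h x y).2)

def eqCon (A : SAlgebra S) : SCon A where
  r := Eq
  iseqv := ⟨fun _ => rfl, Eq.symm, Eq.trans⟩
  compat _ _ _ h := congrArg _ (funext h)

theorem bot_r_iff (x y : A.carrier) : (⊥ : SCon A).r x y ↔ x = y :=
  ⟨(bot_le : (⊥ : SCon A) ≤ eqCon A) x y, fun h => h ▸ (⊥ : SCon A).iseqv.refl x⟩

theorem iInf_r_iff {ι : Type} (φ : ι → SCon A) (x y : A.carrier) :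
    (⨅ i, φ i).r x y ↔ ∀ i, (φ i).r x y :=
  ⟨fun h i => h (φ i) ⟨i, rfl⟩, by rintro h _ ⟨i, rfl⟩; exact h i⟩

theorem comap_piCon {ι : Type} {B : ι → SAlgebra S} (e : SHom A (SAlgebra.pi B))
    (ψ : ∀ i, SCon (B i)) :
    comap e (piCon ψ) = ⨅ i, comap ((SHom.proj B i).comp e) (ψ i) :=
  ext fun x y => (iInf_r_iff (fun i => comap ((SHom.proj B i).comp e) (ψ i)) x y).symm

theorem piCon_bot {ι : Type} {B : ι → SAlgebra S} : piCon (fun i => (⊥ : SCon (B i))) = ⊥ :=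
  ext fun x y => (forall_congr' fun i => bot_r_iff (x i) (y i)).trans
    (funext_iff.symm.trans (bot_r_iff x y).symm)

end SCon

namespace SHom

variable {S : Signature} {A B : SAlgebra S}

def ker (f : SHom A B) : SCon A := SCon.comap f ⊥

theorem ker_r_iff (f : SHom A B) (x y : A.carrier) : f.ker.r x y ↔ f.toFun x = f.toFun y :=
  SCon.bot_r_iff _ _

theorem ker_eq_bot_of_injective {f : SHom A B} (hf : Function.Injective f.toFun) : f.ker = ⊥ :=
  SCon.ext fun x y => (f.ker_r_iff x y).trans (hf.eq_iff.trans (SCon.bot_r_iff x y).symm)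

theorem iInf_ker_proj_comp {ι : Type} {B : ι → SAlgebra S} (e : SHom A (SAlgebra.pi B)) :
    ⨅ i, ((proj B i).comp e).ker = e.ker := by
  rw [ker, ← SCon.piCon_bot, SCon.comap_piCon]
  rfl

end SHom

namespace SCon

variable {S : Signature} {A B : SAlgebra S}

def mapOfSurjective (f : SHom A B) (hf : Function.Surjective f.toFun) (φ : SCon A)
    (hφ : f.ker ≤ φ) : SCon B where
  r a b := ∃ x y, f.toFun x = a ∧ f.toFun y = b ∧ φ.r x y
  iseqv := by
    refine ⟨fun a => ?_, ?_, ?_⟩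
    · obtain ⟨x, rfl⟩ := hf a
      exact ⟨x, x, rfl, rfl, φ.iseqv.refl x⟩
    · rintro _ _ ⟨x, y, rfl, rfl, hxy⟩
      exact ⟨y, x, rfl, rfl, φ.iseqv.symm hxy⟩
    · rintro _ _ _ ⟨x, y, rfl, rfl, hxy⟩ ⟨y', z, hyy', rfl, hyz⟩
      have hy : φ.r y y' := hφ y y' ((f.ker_r_iff y y').2 hyy'.symm)
      exact ⟨x, z, rfl, rfl, φ.iseqv.trans hxy (φ.iseqv.trans hy hyz)⟩
  compat o a b h := by
    choose x y hx hy hxy using h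
    refine ⟨A.interp o x, A.interp o y, ?_, ?_, φ.compat o x y hxy⟩
    · rw [f.map]; exact congrArg _ (funext hx)
    · rw [f.map]; exact congrArg _ (funext hy)

theorem comap_mapOfSurjective (f : SHom A B) (hf : Function.Surjective f.toFun) (φ : SCon A)
    (hφ : f.ker ≤ φ) : comap f (mapOfSurjective f hf φ hφ) = φ := by
  refine ext fun x y => ⟨?_, fun h => ⟨x, y, rfl, rfl, h⟩⟩
  rintro ⟨x', y', hx, hy, hxy⟩
  have hx' : φ.r x x' := hφ x x' ((f.ker_r_iff x x').2 hx.symm)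
  have hy' : φ.r y' y := hφ y' y ((f.ker_r_iff y' y).2 hy)
  exact φ.iseqv.trans hx' (φ.iseqv.trans hxy hy')

end SCon

/-- For a subdirect product-essential embedding `e : A → ∏ Aᵢ` with projection kernels
`ηᵢ`, we have `⋀ ηᵢ = 0` and: whenever `φᵢ ≥ ηᵢ` with `⋀ φᵢ = 0`, then `φᵢ = ηᵢ` for
all `i`. -/
theorem subdirect_product_essential_kernels {S : Signature}
    (n : ℕ) (A : SAlgebra S) (Ai : Fin n → SAlgebra S)
    (e : SHom A (SAlgebra.pi Ai)) (hinj : Function.Injective e.toFun)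
    (hsub : ∀ i, Function.Surjective fun x => e.toFun x i)
    (hpe : ∀ φ : ∀ i, SCon (Ai i), SCon.comap e (SCon.piCon φ) = ⊥ → ∀ i, φ i = ⊥)
    (η : Fin n → SCon A)
    (hη : ∀ (i : Fin n) (x y : A.carrier), (η i).r x y ↔ e.toFun x i = e.toFun y i) :
    (⨅ i, η i) = ⊥ ∧
      ∀ φ : Fin n → SCon A, (∀ i, η i ≤ φ i) → (⨅ i, φ i) = ⊥ → ∀ i, φ i = η i := by
  have hker : ∀ i, η i = ((SHom.proj Ai i).comp e).ker := fun i =>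
    SCon.ext fun x y => (hη i x y).trans (SHom.ker_r_iff ((SHom.proj Ai i).comp e) x y).symm
  simp only [hker]
  refine ⟨(SHom.iInf_ker_proj_comp e).trans (SHom.ker_eq_bot_of_injective hinj),
    fun φ hge hinf i => ?_⟩
  -- `ηᵢ ≤ φᵢ` lets `φᵢ` descend to `ψᵢ` on `Aᵢ`; then `∏ ψᵢ` restricts to `⨅ φᵢ = ⊥`, so every
  -- `ψᵢ = ⊥` and `φᵢ`, the restriction of `ψᵢ`, is the kernel `ηᵢ`.
  let ψ i := SCon.mapOfSurjective _ (hsub i) (φ i) (hge i)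
  have hφψ : ∀ i, SCon.comap ((SHom.proj Ai i).comp e) (ψ i) = φ i := fun i =>
    SCon.comap_mapOfSurjective _ (hsub i) (φ i) (hge i)
  have hψ : SCon.comap e (SCon.piCon ψ) = ⊥ := by
    rw [SCon.comap_piCon, iInf_congr hφψ, hinf]
  rw [← hφψ i, hpe ψ hψ i]
  rfl
end

section
/- Let e: A → ∏_{i=1}^n A_i be a subdirect product-essential embedding in a congruence modular variety, with η_i the kernel of the i-th induced projection, α_i := η_i ∨ ⋀_{j≠i} η_j, and ᾱ_i := α_i/η_i ∈ Con(A_i). Then the product congruence ᾱ_1 × ... × ᾱ_n is dense in Con(∏_{i=1}^n A_i). -/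
/-!
Product-essentiality alone makes each `ᾱᵢ` dense in `Con(Aᵢ)`, since `ᾱᵢ` contains the image of
`⋀_{j ≠ i} ηⱼ`. Density survives pulling back along the projection `∏ Aⱼ → Aᵢ` because
`Con(∏ Aⱼ)` is modular, and `ᾱ₁ × ⋯ × ᾱₙ` is the meet of these finitely many pullbacks.
-/

namespace SCon

variable {S : Signature} {A B : SAlgebra S}

theorem le_def {c d : SCon A} : c ≤ d ↔ ∀ x y, c.r x y → d.r x y := Iff.rfl

theorem bot_r {x y : A.carrier} : (⊥ : SCon A).r x y ↔ x = y := by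
  refine ⟨fun h => h ⟨Eq, ⟨fun _ => rfl, Eq.symm, Eq.trans⟩,
    fun o _ _ hxy => congrArg (A.interp o) (funext hxy)⟩ trivial, ?_⟩
  rintro rfl
  exact (⊥ : SCon A).iseqv.refl x

theorem eq_bot_iff {c : SCon A} : c = ⊥ ↔ ∀ x y, c.r x y → x = y := by
  refine ⟨fun h x y hxy => bot_r.mp (h ▸ hxy), fun h => le_bot_iff.mp ?_⟩
  exact fun x y hxy => bot_r.mpr (h x y hxy)

theorem inf_r {c d : SCon A} {x y : A.carrier} : (c ⊓ d).r x y ↔ c.r x y ∧ d.r x y :=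
  ⟨fun h => ⟨h c (Set.mem_insert c {d}), h d (Set.mem_insert_of_mem c rfl)⟩,
    fun h _ he => he.elim (· ▸ h.1) (· ▸ h.2)⟩

theorem iInf_r {ι : Sort*} {c : ι → SCon A} {x y : A.carrier} :
    (⨅ i, c i).r x y ↔ ∀ i, (c i).r x y :=
  ⟨fun h i => h (c i) ⟨i, rfl⟩, fun h _ ⟨i, hi⟩ => hi ▸ h i⟩

theorem comap_mono (f : SHom A B) {c d : SCon B} (h : c ≤ d) : comap f c ≤ comap f d :=
  fun x y => h (f.toFun x) (f.toFun y)

theorem piCon_eq_iInf_comap {ι : Type} {A : ι → SAlgebra S} (φ : ∀ i, SCon (A i)) :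
    piCon φ = ⨅ i, comap (SHom.proj A i) (φ i) :=
  le_antisymm (le_def.mpr fun _ _ h => iInf_r.mpr h) (le_def.mpr fun _ _ h => iInf_r.mp h)

def map (f : SHom A B) (hf : Function.Surjective f.toFun) (c : SCon A)
    (hc : comap f ⊥ ≤ c) : SCon B where
  r s t := ∃ x y, f.toFun x = s ∧ f.toFun y = t ∧ c.r x y
  iseqv := by
    have hker : ∀ {x y}, f.toFun x = f.toFun y → c.r x y := fun h => hc _ _ (bot_r.mpr h)
    refine ⟨fun s => ?_, fun ⟨x, y, hx, hy, hxy⟩ => ⟨y, x, hy, hx, c.iseqv.symm hxy⟩, ?_⟩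
    · obtain ⟨x, rfl⟩ := hf s
      exact ⟨x, x, rfl, rfl, c.iseqv.refl x⟩
    · rintro _ _ _ ⟨x, y, rfl, hy, hxy⟩ ⟨y', z, hy', rfl, hyz⟩
      exact ⟨x, z, rfl, rfl, c.iseqv.trans hxy (c.iseqv.trans (hker (hy.trans hy'.symm)) hyz)⟩
  compat o s t hst := by
    choose x y hx hy hxy using hst
    refine ⟨A.interp o x, A.interp o y, ?_, ?_, c.compat o x y hxy⟩
    · rw [f.map]; exact congrArg _ (funext hx)
    · rw [f.map]; exact congrArg _ (funext hy)

theorem le_comap_map (f : SHom A B) (hf : Function.Surjective f.toFun) (c : SCon A)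
    (hc : comap f ⊥ ≤ c) : c ≤ comap f (map f hf c hc) :=
  fun x y hxy => ⟨x, y, rfl, rfl, hxy⟩

end SCon

namespace DenseCon

variable {S : Signature} {A B : SAlgebra S}

theorem top : DenseCon (⊤ : SCon A) :=
  fun θ h => by rwa [inf_top_eq] at h

theorem inf {α β : SCon A} (hα : DenseCon α) (hβ : DenseCon β) : DenseCon (α ⊓ β) :=
  fun θ h => hα θ (hβ _ (by rwa [inf_assoc]))

theorem iInf {ι : Type*} [Fintype ι] {α : ι → SCon A} (h : ∀ i, DenseCon (α i)) :
    DenseCon (⨅ i, α i) := by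
  rw [← Finset.inf_univ_eq_iInf]
  exact Finset.inf_induction top (fun _ h₁ _ h₂ => h₁.inf h₂) fun i _ => h i

theorem of_isEmpty [IsEmpty A.carrier] (α : SCon A) : DenseCon α :=
  fun _ _ => SCon.eq_bot_iff.mpr fun x => isEmptyElim x

/-- The modular law makes `ker f ⊔ θ` meet `comap f β` only in `ker f`, so the image of
`ker f ⊔ θ` meets `β` trivially. -/
theorem comap [IsModularLattice (SCon A)] (f : SHom A B) (hf : Function.Surjective f.toFun)
    {β : SCon B} (hβ : DenseCon β) : DenseCon (SCon.comap f β) := by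
  intro θ hθ
  set κ := SCon.comap f ⊥
  have hκβ : κ ≤ SCon.comap f β := SCon.comap_mono f bot_le
  have hmeet : (κ ⊔ θ) ⊓ SCon.comap f β = κ := by
    rw [sup_inf_assoc_of_le θ hκβ, hθ, sup_bot_eq]
  set ψ := SCon.map f hf (κ ⊔ θ) le_sup_left
  have hψ : ψ = ⊥ := by
    refine hβ ψ (SCon.eq_bot_iff.mpr ?_)
    rintro _ _ hst
    obtain ⟨⟨x, y, rfl, rfl, hxy⟩, hβxy⟩ := SCon.inf_r.mp hst
    have : κ.r x y := hmeet ▸ SCon.inf_r.mpr ⟨hxy, hβxy⟩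
    exact SCon.bot_r.mp this
  have hθκ : θ ≤ κ := by
    have h : κ ⊔ θ ≤ SCon.comap f ψ := SCon.le_comap_map f hf (κ ⊔ θ) le_sup_left
    rw [hψ] at h
    exact le_sup_right.trans h
  rw [← hθ, inf_eq_left.mpr (hθκ.trans hκβ)]

end DenseCon

/-- A congruence `ψ` on `Aᵢ` meeting `ᾱᵢ` trivially, put at coordinate `i` with `⊥` elsewhere,
restricts trivially to `A`, hence vanishes by product-essentiality. -/
theorem denseCon_of_productEssential {S : Signature} {ι : Type} [DecidableEq ι]
    {A : SAlgebra S} {Ai : ι → SAlgebra S}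
    (e : SHom A (SAlgebra.pi Ai)) (hinj : Function.Injective e.toFun)
    (hpe : ∀ φ : ∀ i, SCon (Ai i), SCon.comap e (SCon.piCon φ) = ⊥ → ∀ i, φ i = ⊥)
    (αbar : ∀ i, SCon (Ai i))
    (hαbar : ∀ i x y, (∀ j ≠ i, e.toFun x j = e.toFun y j) →
      (αbar i).r (e.toFun x i) (e.toFun y i))
    (i : ι) : DenseCon (αbar i) := by
  intro ψ hψ
  let φ : ∀ j, SCon (Ai j) := Function.update (fun _ => ⊥) i ψ
  have hφ : SCon.comap e (SCon.piCon φ) = ⊥ := by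
    refine SCon.eq_bot_iff.mpr fun x y hxy => hinj (funext fun j => ?_)
    have hoff : ∀ j ≠ i, e.toFun x j = e.toFun y j := fun j hj =>
      SCon.bot_r.mp (by simpa [φ, Function.update_of_ne hj] using hxy j)
    by_cases hj : j = i
    · subst hj
      have hψxy : ψ.r (e.toFun x j) (e.toFun y j) := by simpa [φ] using hxy j
      exact SCon.bot_r.mp (hψ ▸ SCon.inf_r.mpr ⟨hψxy, hαbar j x y hoff⟩)
    · exact hoff j hj
  simpa [φ] using hpe φ hφ i

theorem alpha_bar_product_dense_general {S : Signature}
    (V : SAlgebra S → Prop) (hV : IsCongruenceModularVariety V)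
    (n : ℕ) (A : SAlgebra S) (Ai : Fin n → SAlgebra S)
    (hAi : ∀ i, V (Ai i))
    (e : SHom A (SAlgebra.pi Ai)) (hinj : Function.Injective e.toFun)
    (hpe : ∀ φ : ∀ i, SCon (Ai i), SCon.comap e (SCon.piCon φ) = ⊥ → ∀ i, φ i = ⊥)
    (η : Fin n → SCon A)
    (hη : ∀ (i : Fin n) (x y : A.carrier), (η i).r x y ↔ e.toFun x i = e.toFun y i)
    (αbar : ∀ i, SCon (Ai i))
    (hαbar : ∀ (i : Fin n) (u v : (Ai i).carrier),
      (αbar i).r u v ↔ ∃ x y : A.carrier, e.toFun x i = u ∧ e.toFun y i = v ∧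
        (η i ⊔ ⨅ j : {j : Fin n // j ≠ i}, η j.1).r x y) :
    DenseCon (SCon.piCon αbar) := by
  have hdense : ∀ i, DenseCon (αbar i) := by
    refine denseCon_of_productEssential e hinj hpe αbar fun i x y hxy => ?_
    refine (hαbar i _ _).mpr ⟨x, y, rfl, rfl, le_sup_right (a := η i) x y ?_⟩
    exact SCon.iInf_r.mpr fun j => (hη j.1 x y).mpr (hxy j.1 j.2)
  have : IsModularLattice (SCon (SAlgebra.pi Ai)) := hV.2 _ (hV.1.2.2 (Fin n) Ai hAi)
  rcases isEmpty_or_nonempty (SAlgebra.pi Ai).carrier with hempty | ⟨⟨w⟩⟩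
  · exact DenseCon.of_isEmpty _
  have hproj : ∀ i, Function.Surjective (SHom.proj Ai i).toFun := fun i s =>
    ⟨Function.update w i s, Function.update_self ..⟩
  rw [SCon.piCon_eq_iInf_comap]
  exact DenseCon.iInf fun i => (hdense i).comap _ (hproj i)

/-- For a subdirect product-essential embedding `e : A → ∏ Aᵢ` in a congruence modular
variety, with `ηᵢ` the projection kernels, `αᵢ := ηᵢ ∨ ⋀_{j ≠ i} ηⱼ` and `ᾱᵢ` the image
of `αᵢ` in `Con(Aᵢ)`, the product congruence `ᾱ₁ × ⋯ × ᾱₙ` is dense in `Con(∏ Aᵢ)`. -/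
theorem alpha_bar_product_dense {S : Signature}
    (V : SAlgebra S → Prop) (hV : IsCongruenceModularVariety V)
    (n : ℕ) (A : SAlgebra S) (Ai : Fin n → SAlgebra S)
    (hA : V A) (hAi : ∀ i, V (Ai i))
    (e : SHom A (SAlgebra.pi Ai)) (hinj : Function.Injective e.toFun)
    (hsub : ∀ i, Function.Surjective fun x => e.toFun x i)
    (hpe : ∀ φ : ∀ i, SCon (Ai i), SCon.comap e (SCon.piCon φ) = ⊥ → ∀ i, φ i = ⊥)
    (η : Fin n → SCon A)
    (hη : ∀ (i : Fin n) (x y : A.carrier), (η i).r x y ↔ e.toFun x i = e.toFun y i)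
    (αbar : ∀ i, SCon (Ai i))
    (hαbar : ∀ (i : Fin n) (u v : (Ai i).carrier),
      (αbar i).r u v ↔ ∃ x y : A.carrier, e.toFun x i = u ∧ e.toFun y i = v ∧
        (η i ⊔ ⨅ j : {j : Fin n // j ≠ i}, η j.1).r x y) :
    DenseCon (SCon.piCon αbar) :=
  alpha_bar_product_dense_general V hV n A Ai hAi e hinj hpe η hη αbar hαbar
end
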